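/- Let k be a field, F a finite subset of R, and g in V_{F,j} for some j ≥ 0. Then d_F ≤ max(j, d_{F ∪ {g}}). -/

import Mathlib

/-- `VSpace F i` is the smallest `k`-subspace of `k[X_0,...,X_{m-1}]` containing all
`f ∈ F` of total degree at most `i`, and closed under multiplication by arbitrary
polynomials as long as the product has total degree at most `i`. -/
noncomputable def VSpace {k : Type*} [Field k] {m : ℕ} (F : Set (MvPolynomial (Fin m) k)) (i : ℕ) :
    Submodule k (MvPolynomial (Fin m) k) :=
  sInf {W : Submodule k (MvPolynomial (Fin m) k) |
    (∀ f ∈ F, f.totalDegree ≤ i → f ∈ W) ∧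
    ∀ g ∈ W, ∀ h : MvPolynomial (Fin m) k, (h * g).totalDegree ≤ i → h * g ∈ W}

/-- The last fall degree `d_F`: the minimal `d` such that every `f` in the ideal
generated by `F` lies in `VSpace F (max d (deg f))` (`sInf ∅ = 0` by convention). -/
noncomputable def lastFallDegree {k : Type*} [Field k] {m : ℕ}
    (F : Set (MvPolynomial (Fin m) k)) : ℕ :=
  sInf {d : ℕ | ∀ f ∈ Ideal.span F, f ∈ VSpace F (max d f.totalDegree)}

/-!
Adjoining `g ∈ V_{F,j}` to `F` changes neither the ideal nor any `V_{F,i}` with `i ≥ j`, so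
`d` bounds the fall degrees of `F` iff it bounds those of `F ∪ {g}`, as soon as `d ≥ j`.
-/

section

variable {k : Type*} [Field k] {m : ℕ} {F F' : Set (MvPolynomial (Fin m) k)} {i i' j : ℕ}
  {g : MvPolynomial (Fin m) k}

lemma VSpace_le {W : Submodule k (MvPolynomial (Fin m) k)}
    (hF : ∀ f ∈ F, f.totalDegree ≤ i → f ∈ W)
    (hmul : ∀ g ∈ W, ∀ h : MvPolynomial (Fin m) k, (h * g).totalDegree ≤ i → h * g ∈ W) :
    VSpace F i ≤ W :=
  sInf_le ⟨hF, hmul⟩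

lemma mem_VSpace_of_mem {f : MvPolynomial (Fin m) k} (hf : f ∈ F) (hd : f.totalDegree ≤ i) :
    f ∈ VSpace F i :=
  Submodule.mem_sInf.2 fun _ hW => hW.1 f hf hd

lemma mul_mem_VSpace (h : MvPolynomial (Fin m) k) (hg : g ∈ VSpace F i)
    (hd : (h * g).totalDegree ≤ i) : h * g ∈ VSpace F i :=
  Submodule.mem_sInf.2 fun W hW => hW.2 g (Submodule.mem_sInf.1 hg W hW) h hd

lemma VSpace_mono_degree (hi : i ≤ i') : VSpace F i ≤ VSpace F i' :=
  VSpace_le (fun _ hf hd => mem_VSpace_of_mem hf (hd.trans hi))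
    (fun _ hg h hd => mul_mem_VSpace h hg (hd.trans hi))

lemma VSpace_mono_set (hFF' : F ⊆ F') : VSpace F i ≤ VSpace F' i :=
  VSpace_le (fun _ hf hd => mem_VSpace_of_mem (hFF' hf) hd)
    (fun _ hg h hd => mul_mem_VSpace h hg hd)

lemma VSpace_le_span : VSpace F i ≤ (Ideal.span F).restrictScalars k :=
  VSpace_le (fun _ hf _ => Ideal.subset_span hf) (fun _ hg h _ => Ideal.mul_mem_left _ h hg)

lemma span_union_singleton_of_mem_VSpace (hg : g ∈ VSpace F j) :
    Ideal.span (F ∪ {g}) = Ideal.span F := by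
  rw [Set.union_singleton]
  exact Submodule.span_insert_eq_span (VSpace_le_span hg)

lemma VSpace_union_singleton_of_mem_VSpace (hg : g ∈ VSpace F j) (hji : j ≤ i) :
    VSpace (F ∪ {g}) i = VSpace F i := by
  refine le_antisymm ?_ (VSpace_mono_set Set.subset_union_left)
  refine VSpace_le ?_ (fun _ ha h hd => mul_mem_VSpace h ha hd)
  rintro f (hf | rfl) hd
  · exact mem_VSpace_of_mem hf hd
  · exact VSpace_mono_degree hji hg

def IsFallDegreeBound (F : Set (MvPolynomial (Fin m) k)) (d : ℕ) : Prop :=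
  ∀ f ∈ Ideal.span F, f ∈ VSpace F (max d f.totalDegree)

lemma IsFallDegreeBound.mono {d d' : ℕ} (hd : IsFallDegreeBound F d) (hdd' : d ≤ d') :
    IsFallDegreeBound F d' :=
  fun f hf => VSpace_mono_degree (max_le_max_right _ hdd') (hd f hf)

lemma isFallDegreeBound_union_singleton_iff (hg : g ∈ VSpace F j) {d : ℕ} (hjd : j ≤ d) :
    IsFallDegreeBound (F ∪ {g}) d ↔ IsFallDegreeBound F d := by
  unfold IsFallDegreeBound
  refine forall_congr' fun f => ?_
  rw [span_union_singleton_of_mem_VSpace hg,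
    VSpace_union_singleton_of_mem_VSpace hg (hjd.trans (le_max_left _ _))]

lemma lastFallDegree_le {d : ℕ} (hd : IsFallDegreeBound F d) : lastFallDegree F ≤ d :=
  Nat.sInf_le hd

lemma isFallDegreeBound_lastFallDegree (h : ∃ d, IsFallDegreeBound F d) :
    IsFallDegreeBound F (lastFallDegree F) :=
  Nat.sInf_mem h

lemma lastFallDegree_eq_zero (h : ¬ ∃ d, IsFallDegreeBound F d) : lastFallDegree F = 0 := by
  rw [lastFallDegree, Nat.sInf_eq_zero]
  exact Or.inr (Set.not_nonempty_iff_eq_empty.1 h)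

end

theorem lastFallDegree_le_max_of_mem_VSpace_general {k : Type*} [Field k] {m : ℕ}
    (F : Set (MvPolynomial (Fin m) k)) (j : ℕ)
    (g : MvPolynomial (Fin m) k) (hg : g ∈ VSpace F j) :
    lastFallDegree F ≤ max j (lastFallDegree (F ∪ {g})) := by
  have hbound {d : ℕ} (hjd : j ≤ d) := isFallDegreeBound_union_singleton_iff hg hjd
  by_cases h : ∃ d, IsFallDegreeBound (F ∪ {g}) d
  · apply lastFallDegree_le
    rw [← hbound (le_max_left _ _)]
    exact (isFallDegreeBound_lastFallDegree h).mono (le_max_right _ _)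
  · have hF : ¬ ∃ d, IsFallDegreeBound F d := fun ⟨d, hd⟩ =>
      h ⟨max j d, (hbound (le_max_left _ _)).2 (hd.mono (le_max_right _ _))⟩
    rw [lastFallDegree_eq_zero hF]
    exact Nat.zero_le _

/-- If `g ∈ VSpace F j`, then `d_F ≤ max j d_{F ∪ {g}}`. -/
theorem lastFallDegree_le_max_of_mem_VSpace {k : Type*} [Field k] {m : ℕ}
    (F : Set (MvPolynomial (Fin m) k)) (hF : F.Finite) (j : ℕ)
    (g : MvPolynomial (Fin m) k) (hg : g ∈ VSpace F j) :
    lastFallDegree F ≤ max j (lastFallDegree (F ∪ {g})) :=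
  lastFallDegree_le_max_of_mem_VSpace_general F j g hg
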